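/- arXiv:1503.03157 — 3 statements merged into one kernel-verified Lean document; each statement's English description precedes it below -/
import Mathlib

section
/- Suppose b is a nontrivial vector in ℝ^V and S is a b-boundable subset. If x ∈ ℝ^V is a solution to the linear system ℒx = b satisfying the boundary condition b, then its restriction x_S to S satisfies x_S = ℒ_S^{-1} b₁, where b₁ ∈ ℝ^S is the vector with b₁(v) = Σ_{u∈δ(S), u∼v} b(u)/√(d_v d_u), i.e., b₁ = D_S^{-1/2} A_{S,δS} D_{δS}^{-1/2} b_{δS}. -/
open Matrix MeasureTheory

/-- The normalized Laplacian `ℒ = D^{-1/2}(D-A)D^{-1/2}` of a graph. -/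
noncomputable def nLap {V : Type} [Fintype V] [DecidableEq V] (G : SimpleGraph V)
    [DecidableRel G.Adj] : Matrix V V ℝ :=
  Matrix.diagonal (fun v => (Real.sqrt (G.degree v))⁻¹) *
    (Matrix.diagonal (fun v => (G.degree v : ℝ)) - G.adjMatrix ℝ) *
    Matrix.diagonal (fun v => (Real.sqrt (G.degree v))⁻¹)

/-- The submatrix `ℒ_S` of the normalized Laplacian with rows and columns indexed by `S`. -/
noncomputable def nLapS {V : Type} [Fintype V] [DecidableEq V] (G : SimpleGraph V)
    [DecidableRel G.Adj] (S : Finset V) : Matrix S S ℝ :=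
  (nLap G).submatrix (fun i => (i : V)) (fun j => (j : V))

/-- The vertex boundary `δ(S)`. -/
def vBdry {V : Type} [Fintype V] [DecidableEq V] (G : SimpleGraph V)
    [DecidableRel G.Adj] (S : Finset V) : Finset V :=
  Finset.univ.filter (fun u => u ∉ S ∧ ∃ v ∈ S, G.Adj u v)

/-- The spectral (ℓ²-operator) norm of a real square matrix. -/
noncomputable def specNorm {n : Type} [Fintype n] [DecidableEq n] (M : Matrix n n ℝ) : ℝ :=
  ‖LinearMap.toContinuousLinearMap (Matrix.toEuclideanLin M)‖

/-- The Euclidean (L²) norm of a vector. -/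
noncomputable def l2norm {n : Type} [Fintype n] (f : n → ℝ) : ℝ := Real.sqrt (∑ i, f i ^ 2)

/-- The vector `b₁(v) = Σ_{u ∈ δ(S), u ~ v} b(u)/√(d_v d_u)`. -/
noncomputable def bOne {V : Type} [Fintype V] [DecidableEq V] (G : SimpleGraph V)
    [DecidableRel G.Adj] (S : Finset V) (b : V → ℝ) : S → ℝ :=
  fun v => ∑ u ∈ (vBdry G S).filter (fun u => G.Adj u (v : V)),
    b u / Real.sqrt ((G.degree (v : V)) * (G.degree u))

/-- The submatrix `P_S` of the random-walk transition matrix `P = D⁻¹A`. -/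
noncomputable def PS {V : Type} [Fintype V] [DecidableEq V] (G : SimpleGraph V)
    [DecidableRel G.Adj] (S : Finset V) : Matrix S S ℝ :=
  ((Matrix.diagonal (fun v => ((G.degree v : ℝ))⁻¹) * G.adjMatrix ℝ)).submatrix
    (fun i => (i : V)) (fun j => (j : V))

/-!
On `S` the hypothesis on `x` says `(ℒx)(v) = 0`; splitting the row sum of `ℒ` at `v` into its
parts over `S` and over `V ∖ S`, where `x = b`, gives `ℒ_S x_S = b₁`. It remains to see that `ℒ_S`
is invertible. If `ℒ_S y = 0`, extend `D_S^{-1/2} y` by zero to `f : V → ℝ`. Then `(D - A)f`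
vanishes on `S` and `f` vanishes off `S`, so `fᵀ(D - A)f = ½ Σ_{u∼v} (f u - f v)² = 0` and `f` is
constant along paths of `G`. Since `S` is connected and has a boundary vertex, every vertex of `S`
is joined to a vertex where `f = 0`.
-/

open Finset

theorem Matrix.submatrix_val_mulVec_apply {V R : Type} [Fintype V] [DecidableEq V]
    [NonUnitalNonAssocRing R] (M : Matrix V V R) (S : Finset V) (x : V → R) (v : S) :
    (M.submatrix (fun i : S => (i : V)) (fun j : S => (j : V)) *ᵥ fun u : S => x u) v =
      (M *ᵥ x) v - ∑ u ∈ Sᶜ, M v u * x u := by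
  simp only [mulVec, dotProduct, submatrix_apply]
  rw [eq_sub_iff_add_eq, sum_coe_sort S (fun u => M v u * x u), sum_add_sum_compl]

theorem SimpleGraph.lapMatrix_eq_of_reachable_of_mulVec_eq_zero_on {V : Type} [Fintype V]
    [DecidableEq V] (G : SimpleGraph V) [DecidableRel G.Adj] {S : Set V} {f : V → ℝ}
    (hoff : ∀ v ∉ S, f v = 0) (hon : ∀ v ∈ S, (G.lapMatrix ℝ *ᵥ f) v = 0) {i j : V}
    (hij : G.Reachable i j) : f i = f j := by
  have hquad : toLinearMap₂' ℝ (G.lapMatrix ℝ) f f = 0 := by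
    rw [toLinearMap₂'_apply']
    refine sum_eq_zero fun v _ => ?_
    by_cases hv : v ∈ S
    · rw [hon v hv, mul_zero]
    · rw [hoff v hv, zero_mul]
  exact (G.lapMatrix_toLinearMap₂'_apply'_eq_zero_iff_forall_reachable f).1 hquad i j hij

section

variable {V : Type} [Fintype V] [DecidableEq V] (G : SimpleGraph V) [DecidableRel G.Adj]

theorem nLap_mulVec_apply (g : V → ℝ) (v : V) :
    (nLap G *ᵥ g) v =
      (√(G.degree v))⁻¹ * (G.lapMatrix ℝ *ᵥ fun u => (√(G.degree u))⁻¹ * g u) v := by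
  have hscale : (diagonal fun u => (√(G.degree u))⁻¹) *ᵥ g = fun u => (√(G.degree u))⁻¹ * g u :=
    funext (mulVec_diagonal _ _)
  rw [nLap, ← mulVec_mulVec, ← mulVec_mulVec, mulVec_diagonal, hscale]
  rfl

theorem nLap_mulVec_apply_eq_sub_sum {v : V} (hv : G.degree v ≠ 0) (x : V → ℝ) :
    (nLap G *ᵥ x) v = x v - ∑ u ∈ G.neighborFinset v, x u / √(G.degree v * G.degree u) := by
  have hsv : (√(G.degree v) : ℝ) ≠ 0 := by positivity
  rw [nLap_mulVec_apply, SimpleGraph.lapMatrix_mulVec_apply, mul_sub, mul_sum]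
  congr 1
  · field_simp
    rw [Real.sq_sqrt (Nat.cast_nonneg _)]
  · refine sum_congr rfl fun u _ => ?_
    rw [Real.sqrt_mul (Nat.cast_nonneg _)]
    field_simp

theorem nLap_apply_of_ne {u v : V} (huv : u ≠ v) :
    nLap G u v = -if G.Adj u v then (√(G.degree u * G.degree v))⁻¹ else 0 := by
  simp [nLap, diagonal_mul, mul_diagonal, diagonal_apply_ne _ huv, SimpleGraph.adjMatrix_apply,
    Real.sqrt_mul (Nat.cast_nonneg _), mul_comm]

theorem bOne_apply_eq_neg_sum (S : Finset V) (b : V → ℝ) (v : S) :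
    bOne G S b v = -∑ u ∈ Sᶜ, nLap G v u * b u := by
  have hfilter : (vBdry G S).filter (G.Adj · v) = Sᶜ.filter (G.Adj v ·) := by
    ext u
    simp only [vBdry, mem_filter, mem_univ, true_and, mem_compl, G.adj_comm u]
    exact ⟨fun ⟨⟨huS, _⟩, hvu⟩ => ⟨huS, hvu⟩, fun ⟨huS, hvu⟩ => ⟨⟨huS, v, v.2, hvu⟩, hvu⟩⟩
  simp only [bOne, hfilter, sum_filter, ← sum_neg_distrib]
  refine sum_congr rfl fun u hu => ?_
  have hvu : (v : V) ≠ u := fun h => mem_compl.1 hu (h ▸ v.2)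
  rw [nLap_apply_of_ne G hvu]
  split_ifs <;> simp [div_eq_mul_inv, mul_comm]

variable {G} {S : Finset V}

theorem exists_reachable_notMem_of_connected_induce (hconn : (G.induce (S : Set V)).Connected)
    (hbd : (vBdry G S).Nonempty) {v : V} (hv : v ∈ S) : ∃ u ∉ S, G.Reachable v u := by
  obtain ⟨u, hu⟩ := hbd
  simp only [vBdry, mem_filter, mem_univ, true_and] at hu
  obtain ⟨huS, w, hwS, huw⟩ := hu
  have hvw := (hconn.preconnected ⟨v, hv⟩ ⟨w, hwS⟩).map (SimpleGraph.Embedding.induce _).toHom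
  exact ⟨u, huS, hvw.trans huw.symm.reachable⟩

theorem eq_zero_of_lapMatrix_mulVec_eq_zero_on (hconn : (G.induce (S : Set V)).Connected)
    (hbd : (vBdry G S).Nonempty) {f : V → ℝ} (hoff : ∀ v ∉ S, f v = 0)
    (hon : ∀ v ∈ S, (G.lapMatrix ℝ *ᵥ f) v = 0) : f = 0 := by
  funext v
  by_cases hv : v ∈ S
  · obtain ⟨u, huS, hvu⟩ := exists_reachable_notMem_of_connected_induce hconn hbd hv
    rw [G.lapMatrix_eq_of_reachable_of_mulVec_eq_zero_on hoff hon hvu, hoff u huS, Pi.zero_apply]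
  · exact hoff v hv

theorem eq_zero_of_nLap_mulVec_eq_zero_on (hdeg : ∀ v, 0 < G.degree v)
    (hconn : (G.induce (S : Set V)).Connected) (hbd : (vBdry G S).Nonempty) {g : V → ℝ}
    (hoff : ∀ v ∉ S, g v = 0) (hon : ∀ v ∈ S, (nLap G *ᵥ g) v = 0) : g = 0 := by
  have hsqrt : ∀ v, (√(G.degree v) : ℝ)⁻¹ ≠ 0 := fun v => by
    have := hdeg v
    positivity
  have hscaled : (fun u => (√(G.degree u))⁻¹ * g u) = 0 := by
    refine eq_zero_of_lapMatrix_mulVec_eq_zero_on hconn hbd (fun v hv => ?_) fun v hv => ?_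
    · rw [hoff v hv, mul_zero]
    · have hv' := hon v hv
      rw [nLap_mulVec_apply] at hv'
      exact (mul_eq_zero.1 hv').resolve_left (hsqrt v)
  funext v
  exact (mul_eq_zero.1 (congrFun hscaled v)).resolve_left (hsqrt v)

theorem nLapS_det_ne_zero (hdeg : ∀ v, 0 < G.degree v)
    (hconn : (G.induce (S : Set V)).Connected) (hbd : (vBdry G S).Nonempty) :
    (nLapS G S).det ≠ 0 := by
  rw [Ne, ← exists_mulVec_eq_zero_iff]
  rintro ⟨y, hy0, hy⟩
  let g : V → ℝ := fun v => if h : v ∈ S then y ⟨v, h⟩ else 0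
  have hgS : (fun u : S => g u) = y := funext fun u => dif_pos u.2
  have hoff : ∀ v ∉ S, g v = 0 := fun v hv => dif_neg hv
  have hon : ∀ v ∈ S, (nLap G *ᵥ g) v = 0 := fun v hv => by
    have hv' := (nLap G).submatrix_val_mulVec_apply S g ⟨v, hv⟩
    rwa [hgS, ← nLapS, hy, sum_eq_zero fun u hu => by rw [hoff u (mem_compl.1 hu), mul_zero],
      sub_zero, eq_comm] at hv'
  have hg := eq_zero_of_nLap_mulVec_eq_zero_on hdeg hconn hbd hoff hon
  exact hy0 (by rw [← hgS, hg]; rfl)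

end

theorem local_solution_eq_inv_mulVec_general {V : Type} [Fintype V] [DecidableEq V]
    (G : SimpleGraph V) [DecidableRel G.Adj]
    (hdeg : ∀ v, 0 < G.degree v)
    (b : V → ℝ)
    (S : Finset V)
    (hconn : (G.induce (S : Set V)).Connected)
    (hbd : (vBdry G S).Nonempty)
    (x : V → ℝ)
    (hx : ∀ v ∈ S, x v = ∑ u ∈ G.neighborFinset v,
      x u / Real.sqrt ((G.degree v) * (G.degree u)))
    (hxb : ∀ v ∉ S, x v = b v) :
    (fun v : S => x v) = (nLapS G S)⁻¹.mulVec (bOne G S b) := by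
  have hharmonic : ∀ v ∈ S, (nLap G *ᵥ x) v = 0 := fun v hv => by
    rw [nLap_mulVec_apply_eq_sub_sum G (hdeg v).ne', ← hx v hv, sub_self]
  have hlocal : nLapS G S *ᵥ (fun v : S => x v) = bOne G S b := by
    funext v
    rw [nLapS, (nLap G).submatrix_val_mulVec_apply, hharmonic v v.2, zero_sub,
      bOne_apply_eq_neg_sum]
    exact congrArg _ (sum_congr rfl fun u hu => by rw [hxb u (mem_compl.1 hu)])
  rw [← hlocal, mulVec_mulVec,
    nonsing_inv_mul _ (isUnit_iff_ne_zero.2 (nLapS_det_ne_zero hdeg hconn hbd)), one_mulVec]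

/-- if `x` solves `ℒx = b` with boundary condition `b` and `S` is a
`b`-boundable subset, then `x_S = ℒ_S⁻¹ b₁`. -/
theorem local_solution_eq_inv_mulVec {V : Type} [Fintype V] [DecidableEq V]
    (G : SimpleGraph V) [DecidableRel G.Adj]
    (hdeg : ∀ v, 0 < G.degree v)
    (b : V → ℝ) (hb : b ≠ 0)
    (S : Finset V)
    (hsupp : ∀ v ∈ S, b v = 0)
    (hbsupp : ∃ u ∈ vBdry G S, b u ≠ 0)
    (hconn : (G.induce (S : Set V)).Connected)
    (hbd : (vBdry G S).Nonempty)
    (x : V → ℝ)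
    (hx : ∀ v ∈ S, x v = ∑ u ∈ G.neighborFinset v,
      x u / Real.sqrt ((G.degree v) * (G.degree u)))
    (hxb : ∀ v ∉ S, x v = b v) :
    (fun v : S => x v) = (nLapS G S)⁻¹.mulVec (bOne G S b) :=
  local_solution_eq_inv_mulVec_general G hdeg b S hconn hbd x hx hxb
end

section
/- Let X be a Poisson random variable with parameter t > 0, i.e., ℙ(X = k) = e^{-t} t^k / k! for every nonnegative integer k. Then for any real x > t, ℙ(X ≥ x) ≤ e^{x − t − x·log(x/t)}. -/
open MeasureTheory Real
open scoped ENNReal Nat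

/-!
Chernoff's method: for `θ ≥ 0` the indicator of `{k ≥ x}` is dominated by `e^{θ (k - x)}`, so
`ℙ(X ≥ x) ≤ e^{-θ x} 𝔼[e^{θ X}] = e^{t (e^θ - 1) - θ x}`. The choice `θ = log (x / t)`, which
minimises the exponent, gives the bound.
-/

theorem hasSum_poisson_mul_exp (t θ : ℝ) :
    HasSum (fun k : ℕ => exp (-t) * t ^ k / k ! * exp (θ * k)) (exp (t * (exp θ - 1))) := by
  have h := (NormedSpace.expSeries_div_hasSum_exp (t * exp θ)).mul_left (exp (-t))
  rw [← exp_eq_exp_ℝ, ← exp_add, show -t + t * exp θ = t * (exp θ - 1) by ring] at h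
  refine h.congr_fun fun k => ?_
  rw [mul_pow, ← exp_nat_mul, mul_comm (k : ℝ) θ]
  ring

theorem measure_setOf_mem_le_tsum_mul {Ω ι : Type*} {mΩ : MeasurableSpace Ω} [Countable ι]
    (μ : Measure Ω) (X : Ω → ι) {s : Set ι} {f : ι → ℝ≥0∞} (hf : ∀ k ∈ s, 1 ≤ f k) :
    μ {ω | X ω ∈ s} ≤ ∑' k, μ {ω | X ω = k} * f k := by
  calc μ {ω | X ω ∈ s} = μ (⋃ k ∈ s, {ω | X ω = k}) := by congr 1; ext; simp
    _ ≤ ∑' k : s, μ {ω | X ω = k} := measure_biUnion_le μ s.to_countable _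
    _ = ∑' k, s.indicator (fun k => μ {ω | X ω = k}) k :=
      tsum_subtype s (fun k => μ {ω | X ω = k})
    _ ≤ ∑' k, μ {ω | X ω = k} * f k := by
      refine ENNReal.tsum_le_tsum fun k => ?_
      by_cases hk : k ∈ s
      · rw [Set.indicator_of_mem hk]
        exact le_mul_of_one_le_right' (hf k hk)
      · rw [Set.indicator_of_notMem hk]
        exact zero_le

theorem measure_ge_le_exp_of_poisson {Ω : Type*} {mΩ : MeasurableSpace Ω} (μ : Measure Ω)
    {t : ℝ} (ht : 0 ≤ t) {X : Ω → ℕ}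
    (hX : ∀ k : ℕ, μ {ω | X ω = k} = ENNReal.ofReal (exp (-t) * t ^ k / k !))
    (x : ℝ) {θ : ℝ} (hθ : 0 ≤ θ) :
    μ {ω | x ≤ (X ω : ℝ)} ≤ ENNReal.ofReal (exp (t * (exp θ - 1) - θ * x)) := by
  have hsum := (hasSum_poisson_mul_exp t θ).mul_right (exp (-(θ * x)))
  rw [← exp_add, ← sub_eq_add_neg] at hsum
  calc μ {ω | x ≤ (X ω : ℝ)}
      ≤ ∑' k, μ {ω | X ω = k} * ENNReal.ofReal (exp (θ * (k - x))) := by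
        refine measure_setOf_mem_le_tsum_mul μ X (s := {k : ℕ | x ≤ k}) fun k hk => ?_
        rw [ENNReal.one_le_ofReal, one_le_exp_iff]
        exact mul_nonneg hθ (sub_nonneg.2 hk)
    _ = ∑' k : ℕ, ENNReal.ofReal (exp (-t) * t ^ k / k ! * exp (θ * k) * exp (-(θ * x))) := by
        congr 1 with k
        rw [hX, ← ENNReal.ofReal_mul (by positivity), mul_assoc, ← exp_add, mul_sub,
          sub_eq_add_neg]
    _ = ENNReal.ofReal (exp (t * (exp θ - 1) - θ * x)) := by
        rw [← ENNReal.ofReal_tsum_of_nonneg (fun k => by positivity) hsum.summable, hsum.tsum_eq]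

theorem poisson_upper_tail_general {Ω : Type} {mΩ : MeasurableSpace Ω} (μ : Measure Ω)
    (t : ℝ) (ht : 0 < t) (X : Ω → ℕ)
    (hX : ∀ k : ℕ, μ {ω | X ω = k} =
      ENNReal.ofReal (Real.exp (-t) * t ^ k / (Nat.factorial k)))
    (x : ℝ) (hx : t < x) :
    μ {ω | x ≤ (X ω : ℝ)} ≤
      ENNReal.ofReal (Real.exp (x - t - x * Real.log (x / t))) := by
  have hθ : 0 ≤ log (x / t) := log_nonneg ((one_le_div ht).2 hx.le)
  have hexp : exp (log (x / t)) = x / t := exp_log (div_pos (ht.trans hx) ht)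
  have hexponent : x - t - x * log (x / t) = t * (exp (log (x / t)) - 1) - log (x / t) * x := by
    rw [hexp, mul_sub, mul_div_cancel₀ x ht.ne']
    ring
  rw [hexponent]
  exact measure_ge_le_exp_of_poisson μ ht.le hX x hθ

/-- Chernoff bound for the upper tail of a Poisson random variable:
if `X ~ Poisson(t)` and `x > t` then `ℙ(X ≥ x) ≤ e^{x − t − x log(x/t)}`. -/
theorem poisson_upper_tail {Ω : Type} {mΩ : MeasurableSpace Ω} (μ : Measure Ω)
    [IsProbabilityMeasure μ]
    (t : ℝ) (ht : 0 < t) (X : Ω → ℕ)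
    (hX : ∀ k : ℕ, μ {ω | X ω = k} =
      ENNReal.ofReal (Real.exp (-t) * t ^ k / (Nat.factorial k)))
    (x : ℝ) (hx : t < x) :
    μ {ω | x ≤ (X ω : ℝ)} ≤
      ENNReal.ofReal (Real.exp (x - t - x * Real.log (x / t))) :=
  poisson_upper_tail_general (mΩ := mΩ) μ t ht X hX x hx
end

section
/- Suppose b is a nontrivial vector in ℝ^V, S is a b-boundable subset, and x_S is the local solution to ℒx = b satisfying the boundary condition b. Let b₂ = b₁ᵀ D_S^{1/2}. Then x_S can be expressed via Dirichlet heat kernel pagerank as x_Sᵀ = (∫₀^∞ ρ_{S,t,b₂} dt) · D_S^{-1/2}, where ρ_{S,t,b₂} = b₂ exp(−t(I_S − P_S)), and the integral converges. -/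
open Matrix MeasureTheory

/-- The Dirichlet heat kernel pagerank `ρ_{S,t,f} = fᵀ exp(−t(I_S − P_S))`. -/
noncomputable def dirHKPR {V : Type} [Fintype V] [DecidableEq V] (G : SimpleGraph V)
    [DecidableRel G.Adj] (S : Finset V) (t : ℝ) (f : S → ℝ) : S → ℝ :=
  Matrix.vecMul f (NormedSpace.exp ((-t) • ((1 : Matrix S S ℝ) - PS G S)))

lemma integral_exp_neg_mul_Ioi_zero {b : ℝ} (hb : 0 < b) :
    ∫ t in Set.Ioi (0:ℝ), Real.exp (-b * t) = b⁻¹ := by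
  have h : ∀ x ∈ Set.Ici (0:ℝ),
      HasDerivAt (fun t => -Real.exp (-b*t) / b) (Real.exp (-b * x)) x := by
    intro x _
    have h1 : HasDerivAt (fun t : ℝ => -b * t) (-b) x := by
      simpa using (hasDerivAt_id x).const_mul (-b)
    have := (h1.exp).neg.div_const b
    have e : Real.exp (-b * x) = -(Real.exp (-b * x) * -b) / b := by
      rw [eq_div_iff hb.ne']; ring
    rw [e]; exact this
  have hint := exp_neg_integrableOn_Ioi 0 hb
  have htend : Filter.Tendsto (fun t : ℝ => -Real.exp (-b*t) / b) Filter.atTop (nhds 0) := by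
    have : Filter.Tendsto (fun t : ℝ => Real.exp (-b*t)) Filter.atTop (nhds 0) :=
      Real.tendsto_exp_atBot.comp ((Filter.tendsto_const_mul_atBot_of_neg
        (show -b < 0 by linarith)).2 Filter.tendsto_id)
    simpa using (this.neg.div_const b)
  have := integral_Ioi_of_hasDerivAt_of_tendsto' h hint htend
  rw [this]
  simp
  field_simp

/-- the local solution can be expressed via Dirichlet heat kernel pagerank:
`x_Sᵀ = (∫₀^∞ ρ_{S,t,b₂} dt) D_S^{-1/2}` where `b₂ = b₁ᵀ D_S^{1/2}`, and the integral
converges. -/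
theorem local_solution_eq_integral_dirHKPR {V : Type} [Fintype V] [DecidableEq V]
    (G : SimpleGraph V) [DecidableRel G.Adj]
    (hdeg : ∀ v, 0 < G.degree v)
    (b : V → ℝ) (hb : b ≠ 0)
    (S : Finset V)
    (hsupp : ∀ v ∈ S, b v = 0)
    (hbsupp : ∃ u ∈ vBdry G S, b u ≠ 0)
    (hconn : (G.induce (S : Set V)).Connected)
    (hbd : (vBdry G S).Nonempty)
    (xS : S → ℝ) (hxS : xS = (nLapS G S)⁻¹.mulVec (bOne G S b))
    (b₂ : S → ℝ) (hb₂ : b₂ = fun v : S => bOne G S b v * Real.sqrt (G.degree (v : V))) :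
    IntegrableOn (fun t : ℝ => dirHKPR G S t b₂) (Set.Ioi 0) volume ∧
      ∀ v : S, xS v =
        (∫ t in Set.Ioi (0 : ℝ), dirHKPR G S t b₂) v * (Real.sqrt (G.degree (v : V)))⁻¹ := by
  -- degree facts
  have hd : ∀ v : V, (0:ℝ) < (G.degree v : ℝ) := fun v => by exact_mod_cast hdeg v
  have hsq : ∀ v : V, (0:ℝ) < Real.sqrt (G.degree v) := fun v => Real.sqrt_pos.2 (hd v)
  set L : Matrix S S ℝ := nLapS G S with hL
  -- nLap as conjugation of the Laplacian matrix
  have hnlap : nLap G = (Matrix.diagonal fun v : V => (Real.sqrt (G.degree v))⁻¹)ᴴ *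
      G.lapMatrix ℝ * (Matrix.diagonal fun v : V => (Real.sqrt (G.degree v))⁻¹) := by
    rw [Matrix.diagonal_conjTranspose]
    have hst : star (fun v : V => (Real.sqrt (G.degree v))⁻¹) =
        fun v : V => (Real.sqrt (G.degree v))⁻¹ := by funext; simp
    rw [hst]
    rfl
  have hPSD : L.PosSemidef := by
    have := ((SimpleGraph.posSemidef_lapMatrix ℝ G).conjTranspose_mul_mul_same
      (Matrix.diagonal fun v : V => (Real.sqrt (G.degree v))⁻¹))
    rw [← hnlap] at this
    exact this.submatrix _
  -- quadratic form zero implies zero (uses connectivity and boundary)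
  have hquad : ∀ x : (S → ℝ), x ⬝ᵥ (L *ᵥ x) = 0 → x = 0 := by
    intro x hx0
    set xt : V → ℝ := fun w => if h : w ∈ S then x ⟨w, h⟩ else 0 with hxt
    set y : V → ℝ := fun w => (Real.sqrt (G.degree w))⁻¹ * xt w with hy
    have hy0 : ∀ a, a ∉ S → y a = 0 := by
      intro a ha; simp [hy, hxt, dif_neg ha]
    have hentry : ∀ v w : S, L v w =
        (Real.sqrt (G.degree (v:V)))⁻¹ * (G.lapMatrix ℝ (v:V) (w:V)) *
          (Real.sqrt (G.degree (w:V)))⁻¹ := by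
      intro v w
      simp [hL, nLapS, hnlap, Matrix.submatrix_apply, Matrix.mul_diagonal, Matrix.diagonal_mul,
        Matrix.diagonal_conjTranspose]
    have hform : y ⬝ᵥ (G.lapMatrix ℝ *ᵥ y) = 0 := by
      rw [← hx0]
      have hrw1 : y ⬝ᵥ (G.lapMatrix ℝ *ᵥ y) = ∑ a, ∑ b, y a * (G.lapMatrix ℝ a b * y b) := by
        simp [dotProduct, Matrix.mulVec, Finset.mul_sum]
      have hrw2 : x ⬝ᵥ (L *ᵥ x) = ∑ v : S, ∑ w : S, x v * (L v w * x w) := by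
        simp [dotProduct, Matrix.mulVec, Finset.mul_sum]
      rw [hrw1, hrw2]
      have hstep1 : ∑ a, ∑ b, y a * (G.lapMatrix ℝ a b * y b)
          = ∑ a ∈ S, ∑ b ∈ S, y a * (G.lapMatrix ℝ a b * y b) := by
        rw [← Finset.sum_subset (Finset.subset_univ S)
          (fun a _ ha => Finset.sum_eq_zero fun b _ => by rw [hy0 a ha, zero_mul])]
        exact Finset.sum_congr rfl fun a _ =>
          (Finset.sum_subset (Finset.subset_univ S)
            (fun b _ hb => by rw [hy0 b hb, mul_zero, mul_zero])).symm
      rw [hstep1]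
      rw [← Finset.sum_attach S (fun a => ∑ b ∈ S, y a * (G.lapMatrix ℝ a b * y b))]
      rw [Finset.univ_eq_attach]
      refine Finset.sum_congr rfl fun v _ => ?_
      rw [← Finset.sum_attach S (fun b => y v * (G.lapMatrix ℝ v b * y b))]
      refine Finset.sum_congr rfl fun w _ => ?_
      have hyv : ∀ v : S, y (v : V) = (Real.sqrt (G.degree (v:V)))⁻¹ * x v := by
        intro v
        simp [hy, hxt, dif_pos v.2]
      rw [hyv, hyv, hentry]
      ring
    have hadj : ∀ i j, G.Adj i j → y i = y j := by
      have := (SimpleGraph.lapMatrix_toLinearMap₂'_apply'_eq_zero_iff_forall_adj (R := ℝ) (G := G) y).1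
      apply this
      rw [Matrix.toLinearMap₂'_apply']
      exact hform
    obtain ⟨u, hu⟩ := hbd
    rw [vBdry, Finset.mem_filter] at hu
    obtain ⟨-, huS, v₀, hv₀S, hadj0⟩ := hu
    have hyv₀ : y v₀ = 0 := by rw [← hadj u v₀ hadj0]; exact hy0 u huS
    have hkey : ∀ (a c : ↥((S:Set V))) (p : (G.induce (S:Set V)).Walk a c), y ↑a = y ↑c := by
      intro a c p
      induction p with
      | nil => rfl
      | cons h p ih => exact (hadj _ _ (by simpa using h)).trans ih
    have hyS : ∀ w ∈ S, y w = 0 := by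
      intro w hw
      obtain ⟨p⟩ := hconn.preconnected ⟨v₀, by simpa using hv₀S⟩ ⟨w, by simpa using hw⟩
      rw [← hkey _ _ p]; exact hyv₀
    funext v
    have h1 := hyS (v : V) v.2
    have h2 : (Real.sqrt (G.degree (v:V)))⁻¹ * x v = 0 := by
      rw [← h1]; simp [hy, hxt, dif_pos v.2]
    rcases mul_eq_zero.1 h2 with h | h
    · exact absurd h (inv_ne_zero (hsq _).ne')
    · exact h
  have hPD : L.PosDef := by
    refine Matrix.PosDef.of_dotProduct_mulVec_pos hPSD.1 fun x hx => ?_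
    have h1 := hPSD.dotProduct_mulVec_nonneg x
    rcases lt_or_eq_of_le h1 with h | h
    · exact h
    · exact absurd (hquad x (by simpa using h.symm)) hx
  -- spectral data
  have hH : L.IsHermitian := hPD.1
  set U : Matrix S S ℝ := (Matrix.IsHermitian.eigenvectorUnitary hH : Matrix S S ℝ) with hU
  set μ : S → ℝ := hH.eigenvalues with hμ
  have hμpos : ∀ i, 0 < μ i := hPD.eigenvalues_pos
  have hspec : L = U * Matrix.diagonal μ * star U := by
    have h := hH.spectral_theorem
    simpa [RCLike.ofReal_real_eq_id] using h
  have hUstar : U * star U = 1 :=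
    Matrix.mem_unitaryGroup_iff.mp (Matrix.IsHermitian.eigenvectorUnitary hH).2
  have hstarU : star U * U = 1 := mul_eq_one_comm.mp hUstar
  have hdiagμ : Matrix.diagonal μ * Matrix.diagonal (fun i => (μ i)⁻¹) = 1 := by
    rw [Matrix.diagonal_mul_diagonal]
    have h : (fun i => μ i * (μ i)⁻¹) = fun _ => (1:ℝ) :=
      funext fun i => mul_inv_cancel₀ (hμpos i).ne'
    rw [h, Matrix.diagonal_one]
  have hLinv : L⁻¹ = U * Matrix.diagonal (fun i => (μ i)⁻¹) * star U := by
    apply Matrix.inv_eq_right_inv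
    rw [hspec]
    have key : U * (Matrix.diagonal μ * (star U * (U *
        (Matrix.diagonal (fun i => (μ i)⁻¹) * star U)))) = 1 := by
      rw [← Matrix.mul_assoc (star U), hstarU, Matrix.one_mul,
        ← Matrix.mul_assoc (Matrix.diagonal μ), hdiagμ, Matrix.one_mul, hUstar]
    simpa only [Matrix.mul_assoc] using key
  -- diagonal conjugation factorization
  set Dg : Matrix S S ℝ := Matrix.diagonal (fun v : S => Real.sqrt (G.degree (v:V))) with hDg
  set Dinv : Matrix S S ℝ :=
    Matrix.diagonal (fun v : S => (Real.sqrt (G.degree (v:V)))⁻¹) with hDinv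
  have hDgDinv : Dg * Dinv = 1 := by
    rw [hDg, hDinv, Matrix.diagonal_mul_diagonal]
    have h : (fun v : S => Real.sqrt (G.degree (v:V)) * (Real.sqrt (G.degree (v:V)))⁻¹)
        = fun _ => (1:ℝ) := funext fun v => mul_inv_cancel₀ (hsq _).ne'
    rw [h, Matrix.diagonal_one]
  have hfact : (1 : Matrix S S ℝ) - PS G S = Dinv * L * Dg := by
    ext v w
    have hA := Matrix.mul_diagonal (fun v : S => Real.sqrt (G.degree (v:V))) (Dinv * L) v w
    rw [hDg, hDinv] at *
    rw [Matrix.sub_apply, Matrix.one_apply]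
    rw [Matrix.mul_diagonal, Matrix.diagonal_mul]
    have hLe : L v w = (Real.sqrt (G.degree (v:V)))⁻¹ *
        (((if (v:V) = (w:V) then (G.degree (v:V) : ℝ) else 0) - G.adjMatrix ℝ (v:V) (w:V)) *
          (Real.sqrt (G.degree (w:V)))⁻¹) := by
      simp [hL, nLapS, nLap, Matrix.submatrix_apply, Matrix.mul_diagonal, Matrix.diagonal_mul,
        Matrix.diagonal_apply, mul_assoc]
    have hPSe : PS G S v w = ((G.degree (v:V) : ℝ))⁻¹ * G.adjMatrix ℝ (v:V) (w:V) := by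
      rw [PS, Matrix.submatrix_apply, Matrix.diagonal_mul]
    rw [hLe, hPSe]
    have hss : Real.sqrt (G.degree (v:V)) * Real.sqrt (G.degree (v:V)) = (G.degree (v:V) : ℝ) :=
      Real.mul_self_sqrt (hd _).le
    have hinv2 : (Real.sqrt (G.degree (v:V)))⁻¹ * (Real.sqrt (G.degree (v:V)))⁻¹
        = ((G.degree (v:V) : ℝ))⁻¹ := by rw [← mul_inv, hss]
    have hcoe : ((v:V) = (w:V)) ↔ (v = w) := Subtype.coe_inj
    have hrhs : (Real.sqrt (G.degree (v:V)))⁻¹ *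
        ((Real.sqrt (G.degree (v:V)))⁻¹ *
          (((if (v:V) = (w:V) then (G.degree (v:V) : ℝ) else 0) - G.adjMatrix ℝ (v:V) (w:V)) *
            (Real.sqrt (G.degree (w:V)))⁻¹)) * Real.sqrt (G.degree (w:V))
        = ((G.degree (v:V) : ℝ))⁻¹ *
          ((if (v:V) = (w:V) then (G.degree (v:V) : ℝ) else 0) - G.adjMatrix ℝ (v:V) (w:V)) := by
      rw [← hinv2]
      field_simp
      rw [mul_div_mul_right _ _ (hsq (w:V)).ne']
    rw [hrhs, mul_sub]
    by_cases hvw : v = w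
    · rw [if_pos hvw, if_pos (hcoe.mpr hvw), inv_mul_cancel₀ (hd (v:V)).ne']
    · rw [if_neg hvw, if_neg (fun h => hvw (hcoe.mp h)), mul_zero]
  -- exponential conjugation
  have hDgUnit : IsUnit Dg :=
    ⟨⟨Dg, Dinv, hDgDinv, mul_eq_one_comm.mp hDgDinv⟩, rfl⟩
  have hDginv : Dg⁻¹ = Dinv := Matrix.inv_eq_right_inv hDgDinv
  have hUUnit : IsUnit U := ⟨⟨U, star U, hUstar, hstarU⟩, rfl⟩
  have hUinv : U⁻¹ = star U := Matrix.inv_eq_right_inv hUstar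
  have hexpL : ∀ t : ℝ, NormedSpace.exp ((-t) • L) =
      U * Matrix.diagonal (fun i => Real.exp (-μ i * t)) * star U := by
    intro t
    have h1 : (-t) • L = U * ((-t) • Matrix.diagonal μ) * U⁻¹ := by
      rw [hUinv, hspec]
      simp only [mul_smul_comm, smul_mul_assoc]
    rw [h1, Matrix.exp_conj U ((-t) • Matrix.diagonal μ) hUUnit, hUinv]
    have h2 : NormedSpace.exp ((-t) • Matrix.diagonal μ)
        = Matrix.diagonal (fun i => Real.exp (-μ i * t)) := by
      rw [← Matrix.diagonal_smul, Matrix.exp_diagonal, Pi.exp_def]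
      simp only [Pi.smul_apply, smul_eq_mul, ← Real.exp_eq_exp_ℝ]
      exact congrArg Matrix.diagonal (funext fun i => by ring_nf)
    rw [h2]
  have hexp : ∀ t : ℝ, NormedSpace.exp ((-t) • ((1 : Matrix S S ℝ) - PS G S)) =
      Dinv * NormedSpace.exp ((-t) • L) * Dg := by
    intro t
    rw [hfact]
    have h1 : (-t) • (Dinv * L * Dg) = Dg⁻¹ * ((-t) • L) * Dg := by
      rw [hDginv]
      simp only [mul_smul_comm, smul_mul_assoc]
    rw [h1, Matrix.exp_conj' Dg ((-t) • L) hDgUnit, hDginv]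
  -- decomposition of the heat kernel pagerank as a finite sum of decaying exponentials
  set g : S → ℝ := Matrix.vecMul (bOne G S b) U with hg
  set c : S → S → ℝ := fun i v => g i * U v i * Real.sqrt (G.degree (v:V)) with hc
  have hgi : ∀ i, g i = ∑ w : S, bOne G S b w * U w i := fun i => by
    simp [hg, Matrix.vecMul, dotProduct]
  have hF : (fun t : ℝ => dirHKPR G S t b₂)
      = fun t => ∑ i : S, Real.exp (-μ i * t) • c i := by
    funext t
    simp only [dirHKPR]
    rw [hexp t, hexpL t]
    have hb1 : Matrix.vecMul b₂ Dinv = bOne G S b := by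
      funext v
      rw [hDinv, Matrix.vecMul_diagonal, hb₂]
      rw [mul_assoc, mul_inv_cancel₀ (hsq _).ne', mul_one]
    funext v
    simp only [← Matrix.vecMul_vecMul]
    rw [hb1, hDg, Matrix.vecMul_diagonal]
    have hde : Matrix.vecMul (Matrix.vecMul (bOne G S b) U)
        (Matrix.diagonal (fun i => Real.exp (-μ i * t)))
        = fun i => g i * Real.exp (-μ i * t) :=
      funext fun i => by rw [Matrix.vecMul_diagonal, hg]
    rw [hde]
    have hsU : Matrix.vecMul (fun i => g i * Real.exp (-μ i * t)) (star U) v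
        = ∑ i : S, g i * Real.exp (-μ i * t) * U v i := by
      simp [Matrix.vecMul, dotProduct, Matrix.star_apply]
    rw [hsU, Finset.sum_apply, Finset.sum_mul]
    refine Finset.sum_congr rfl fun i _ => ?_
    rw [Pi.smul_apply, smul_eq_mul]
    simp only [hc]
    ring
  have hInt : ∀ i : S, IntegrableOn (fun t : ℝ => Real.exp (-μ i * t) • c i)
      (Set.Ioi 0) volume :=
    fun i => (exp_neg_integrableOn_Ioi 0 (hμpos i)).smul_const (c i)
  have hIntAll : IntegrableOn (fun t : ℝ => dirHKPR G S t b₂) (Set.Ioi 0) volume := by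
    rw [hF]; exact integrable_finset_sum _ (fun i _ => hInt i)
  have hIval : (∫ t in Set.Ioi (0:ℝ), dirHKPR G S t b₂) = ∑ i : S, (μ i)⁻¹ • c i := by
    rw [hF, integral_finset_sum _ (fun i _ => hInt i)]
    refine Finset.sum_congr rfl fun i _ => ?_
    rw [integral_smul_const, integral_exp_neg_mul_Ioi_zero (hμpos i)]
  refine ⟨hIntAll, fun v => ?_⟩
  rw [hxS, hIval, hLinv]
  have hMentry : ∀ w : S, (U * Matrix.diagonal (fun i => (μ i)⁻¹) * star U) v w
      = ∑ i : S, U v i * (μ i)⁻¹ * U w i := by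
    intro w
    rw [Matrix.mul_apply]
    refine Finset.sum_congr rfl fun i _ => ?_
    rw [Matrix.mul_diagonal, Matrix.star_apply, star_trivial]
  have hlhs : ((U * Matrix.diagonal (fun i => (μ i)⁻¹) * star U) *ᵥ (bOne G S b)) v
      = ∑ i : S, (μ i)⁻¹ * g i * U v i := by
    have h0 : ((U * Matrix.diagonal (fun i => (μ i)⁻¹) * star U) *ᵥ (bOne G S b)) v
        = ∑ w : S, (∑ i : S, U v i * (μ i)⁻¹ * U w i) * bOne G S b w := by
      simp [Matrix.mulVec, dotProduct, hMentry]
    rw [h0]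
    simp only [Finset.sum_mul]
    rw [Finset.sum_comm]
    refine Finset.sum_congr rfl fun i _ => ?_
    rw [hgi i, Finset.mul_sum, Finset.sum_mul]
    refine Finset.sum_congr rfl fun w _ => ?_
    ring
  rw [hlhs]
  rw [Finset.sum_apply, Finset.sum_mul]
  refine Finset.sum_congr rfl fun i _ => ?_
  rw [Pi.smul_apply, smul_eq_mul]
  simp only [hc]
  rw [mul_assoc, mul_assoc, mul_assoc, mul_inv_cancel₀ (hsq _).ne', mul_one]
end
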